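/- Under the setup of the spike-function approximation, the approximant f_N(x) = Σ_{n∈J^m} (h∘f)(n/N) φ(Nx − n) is Lipschitz with Lip^{(1)}(f_N) ≤ Lip^{(1)}(f) + 2Nδ, where Lip^{(1)} denotes the Lipschitz constant with respect to the ℓ^1 norm on the domain. -/

import Mathlib

/-- The spike function `φ(x) = max{1 + min{x₁,...,x_m,0} − max{x₁,...,x_m,0}, 0}`. -/
noncomputable def spike (m : ℕ) (x : Fin m → ℝ) : ℝ :=
  max (1 + min (⨅ i, x i) 0 - max (⨆ i, x i) 0) 0

/-- The spike-function interpolant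
`f_N(x) = ∑_{n ∈ {0,...,N}^m} (h ∘ f)(n/N) φ(Nx − n)`. -/
noncomputable def interpolant (m N : ℕ) (f : (Fin m → ℝ) → ℝ) (h : ℝ → ℝ)
    (x : Fin m → ℝ) : ℝ :=
  ∑ n : Fin m → Fin (N + 1),
    h (f (fun i => (n i : ℝ) / N)) * spike m (fun i => N * x i - (n i : ℝ))

/-!
Randomized rounding: for `θ` uniform on `[0,1)`, round `N x` coordinatewise to `⌈N x - θ⌉`.
This is the grid point `n` exactly when `θ` lies in `[0,1)` and in every
`[N x_j - n_j, N x_j - n_j + 1)`, an interval of length `φ(N x - n)`; so `f_N(x)` is the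
expectation of `(h ∘ f)(n / N)`. Rounding `x` and `y` with the same `θ` makes the expected `ℓ¹`
distance of the two grid points exactly `N ‖x - y‖₁`, since `∫₀¹ ⌈a - θ⌉ dθ = a`. On the grid,
`(h ∘ f)(n / N)` moves by at most `Lip f / N + 2δ` per unit of distance.
-/

open MeasureTheory Set

section FiniteSupInf

variable {ι : Type*} [Finite ι] (t : ι → ℝ) (a : ℝ)

theorem max_ciSup_zero_le_iff : max (⨆ i, t i) 0 ≤ a ↔ (∀ i, t i ≤ a) ∧ 0 ≤ a := by
  refine ⟨fun h => ⟨fun i => ?_, (le_max_right _ _).trans h⟩,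
    fun ⟨h, ha⟩ => max_le (Real.iSup_le h ha) ha⟩
  exact (le_ciSup (Finite.bddAbove_range t) i).trans ((le_max_left _ _).trans h)

theorem lt_min_ciInf_zero_iff : a < min (⨅ i, t i) 0 ↔ (∀ i, a < t i) ∧ a < 0 := by
  rw [lt_min_iff, and_congr_left_iff]
  intro _
  rcases isEmpty_or_nonempty ι with hι | hι
  · simpa [Real.iInf_of_isEmpty]
  · obtain ⟨i₀, hi₀⟩ := exists_eq_ciInf_of_finite (f := t)
    exact ⟨fun h i => h.trans_le (ciInf_le (Finite.bddBelow_range t) i), fun h => hi₀ ▸ h i₀⟩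

end FiniteSupInf

theorem spike_eq_volume_real {m : ℕ} (t : Fin m → ℝ) :
    spike m t = volume.real {θ ∈ Ico (0 : ℝ) 1 | ∀ j, θ ∈ Ico (t j) (t j + 1)} := by
  have hset : {θ ∈ Ico (0 : ℝ) 1 | ∀ j, θ ∈ Ico (t j) (t j + 1)} =
      Ico (max (⨆ j, t j) 0) (min (⨅ j, t j) 0 + 1) := by
    ext θ
    simp only [mem_ofPred_eq, mem_Ico, max_ciSup_zero_le_iff, ← sub_lt_iff_lt_add,
      lt_min_ciInf_zero_iff, sub_neg, forall_and]
    tauto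
  rw [hset, Real.volume_real_Ico, spike]
  ring_nf

section GridRound

variable {ι : Type*} {N : ℕ} {x : ι → ℝ} {θ : ℝ}

/-- For `θ` uniform on `[0,1)`, each coordinate of `N • x` is rounded up with probability equal
to its fractional part. -/
noncomputable def gridRound (N : ℕ) (x : ι → ℝ) (θ : ℝ) : ι → Fin (N + 1) :=
  fun j => Fin.clamp ⌈N * x j - θ⌉.toNat N

theorem measurable_gridRound : Measurable (gridRound (ι := ι) N x) :=
  measurable_pi_lambda _ fun _ =>
    (measurable_from_top (f := fun k : ℤ => Fin.clamp k.toNat N)).comp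
      (Int.measurable_ceil.comp (measurable_const.sub measurable_id))

theorem gridRound_coe (hx : x ∈ Icc 0 1) (hθ : θ ∈ Ico 0 1) (j : ι) :
    ((gridRound N x θ j : ℕ) : ℤ) = ⌈N * x j - θ⌉ := by
  have hNx₀ : 0 ≤ (N : ℝ) * x j := mul_nonneg N.cast_nonneg (hx.1 j)
  have hNx₁ : (N : ℝ) * x j ≤ N := mul_le_of_le_one_right N.cast_nonneg (hx.2 j)
  have hlo : (-1 : ℝ) < N * x j - θ := by linarith [hθ.2]
  have hhi : N * x j - θ ≤ N := by linarith [hθ.1]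
  have h0 : 0 ≤ ⌈N * x j - θ⌉ := Int.lt_ceil.2 (by exact_mod_cast hlo)
  have hN' : ⌈N * x j - θ⌉ ≤ N := Int.ceil_le.2 (by exact_mod_cast hhi)
  simp only [gridRound, Fin.clamp]
  omega

theorem gridRound_eq_iff (hx : x ∈ Icc 0 1) (hθ : θ ∈ Ico 0 1) (n : ι → Fin (N + 1)) :
    gridRound N x θ = n ↔ ∀ j, θ ∈ Ico (N * x j - n j) (N * x j - n j + 1) := by
  refine funext_iff.trans (forall_congr' fun j => ?_)
  rw [← Fin.val_inj, ← Nat.cast_inj (R := ℤ), gridRound_coe hx hθ, Int.ceil_eq_iff, mem_Ico]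
  push_cast
  constructor <;> rintro ⟨h₁, h₂⟩ <;> constructor <;> linarith

end GridRound

theorem sum_mul_spike_eq_setIntegral {m N : ℕ} (c : (Fin m → Fin (N + 1)) → ℝ)
    {x : Fin m → ℝ} (hx : x ∈ Icc 0 1) :
    ∑ n, c n * spike m (fun j => N * x j - n j) = ∫ θ in Ico 0 1, c (gridRound N x θ) := by
  rw [← integral_map measurable_gridRound.aemeasurable
    Integrable.of_finite.aestronglyMeasurable, integral_fintype Integrable.of_finite]
  refine Finset.sum_congr rfl fun n _ => ?_
  rw [smul_eq_mul, mul_comm, map_measureReal_apply measurable_gridRound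
    (measurableSet_singleton n), measureReal_restrict_apply' measurableSet_Ico,
    spike_eq_volume_real]
  congr 2
  ext θ
  simp only [mem_inter_iff, mem_preimage, mem_singleton_iff, mem_ofPred_eq]
  exact and_comm.trans (and_congr_left fun hθ => (gridRound_eq_iff hx hθ n).symm)

theorem ceil_sub_eq_floor_add_indicator (a : ℝ) {θ : ℝ} (hθ : θ ∈ Ico (0 : ℝ) 1) :
    (⌈a - θ⌉ : ℝ) = ⌊a⌋ + (Ico 0 (Int.fract a)).indicator 1 θ := by
  have ha := Int.floor_add_fract a
  by_cases hθa : θ < Int.fract a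
  · rw [indicator_of_mem (show θ ∈ Ico 0 (Int.fract a) from ⟨hθ.1, hθa⟩), Pi.one_apply,
      ← Int.cast_one, ← Int.cast_add, Int.cast_inj, Int.ceil_eq_iff]
    push_cast
    constructor <;> linarith [hθ.1, Int.fract_lt_one a]
  · rw [indicator_of_notMem fun h => hθa h.2, add_zero, Int.cast_inj, Int.ceil_eq_iff]
    constructor <;> linarith [hθ.2, not_lt.1 hθa, Int.fract_nonneg a]

theorem setIntegral_ceil_sub (a : ℝ) : ∫ θ in Ico (0 : ℝ) 1, (⌈a - θ⌉ : ℝ) = a := by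
  rw [setIntegral_congr_fun measurableSet_Ico fun θ => ceil_sub_eq_floor_add_indicator a,
    integral_add (integrable_const _) ((integrable_const 1).indicator measurableSet_Ico),
    integral_const, integral_indicator_one measurableSet_Ico,
    measureReal_restrict_apply_univ, measureReal_restrict_apply' measurableSet_Ico,
    Ico_inter_Ico, Real.volume_real_Ico, Real.volume_real_Ico]
  simp [(Int.fract_lt_one a).le, Int.floor_add_fract]

theorem setIntegral_abs_ceil_sub_ceil (a b : ℝ) :
    ∫ θ in Ico (0 : ℝ) 1, |(⌈a - θ⌉ : ℝ) - ⌈b - θ⌉| = |a - b| := by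
  wlog hba : b ≤ a generalizing a b
  · simpa only [abs_sub_comm] using this b a (le_of_not_ge hba)
  have hint (c : ℝ) : IntegrableOn (fun θ => (⌈c - θ⌉ : ℝ)) (Ico 0 1) :=
    (AntitoneOn.integrableOn_isCompact isCompact_Icc fun u _ v _ huv =>
      Int.cast_le.2 (Int.ceil_mono (by linarith))).mono_set Ico_subset_Icc_self
  have habs (θ : ℝ) : |(⌈a - θ⌉ : ℝ) - ⌈b - θ⌉| = ⌈a - θ⌉ - ⌈b - θ⌉ :=
    abs_of_nonneg (sub_nonneg.2 (Int.cast_le.2 (Int.ceil_mono (by linarith))))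
  simp only [habs]
  rw [integral_sub (hint a) (hint b), setIntegral_ceil_sub, setIntegral_ceil_sub,
    abs_of_nonneg (sub_nonneg.2 hba)]

theorem abs_integral_sub_integral_le_integral {Ω α : Type*} [MeasurableSpace Ω]
    {μ : Measure Ω} [IsFiniteMeasure μ] [Finite α] [MeasurableSpace α]
    [MeasurableSingletonClass α] {G₁ G₂ : Ω → α} (hG₁ : Measurable G₁) (hG₂ : Measurable G₂)
    {c : α → ℝ} {d : α → α → ℝ} {K : ℝ} (hc : ∀ a b, |c a - c b| ≤ K * d a b) :
    |∫ ω, c (G₁ ω) ∂μ - ∫ ω, c (G₂ ω) ∂μ| ≤ K * ∫ ω, d (G₁ ω) (G₂ ω) ∂μ := by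
  have h₁ : Integrable (fun ω => c (G₁ ω)) μ := Integrable.of_finite.comp_measurable hG₁
  have h₂ : Integrable (fun ω => c (G₂ ω)) μ := Integrable.of_finite.comp_measurable hG₂
  have hd : Integrable (fun ω => K * d (G₁ ω) (G₂ ω)) μ :=
    Integrable.of_finite.comp_measurable (g := fun p : α × α => K * d p.1 p.2) (hG₁.prodMk hG₂)
  rw [← integral_sub h₁ h₂, ← integral_const_mul]
  exact abs_integral_le_integral_abs.trans (integral_mono (h₁.sub h₂).abs hd fun ω => hc _ _)

theorem setIntegral_sum_abs_gridRound_sub {ι : Type*} [Fintype ι] {N : ℕ} {x y : ι → ℝ}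
    (hx : x ∈ Icc 0 1) (hy : y ∈ Icc 0 1) :
    ∫ θ in Ico 0 1, ∑ j, |((gridRound N x θ j : ℕ) : ℝ) - gridRound N y θ j| =
      N * ∑ j, |x j - y j| := by
  have hint (j : ι) : Integrable
      (fun θ => |((gridRound N x θ j : ℕ) : ℝ) - gridRound N y θ j|) (volume.restrict (Ico 0 1)) :=
    Integrable.of_finite.comp_measurable (f := fun θ => (gridRound N x θ j, gridRound N y θ j))
      (g := fun p => |((p.1 : ℕ) : ℝ) - p.2|)
      ((measurable_pi_apply j).comp measurable_gridRound |>.prodMk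
        ((measurable_pi_apply j).comp measurable_gridRound))
  rw [integral_finsetSum _ fun j _ => hint j, Finset.mul_sum]
  refine Finset.sum_congr rfl fun j _ => ?_
  have hceil (z : ι → ℝ) (hz : z ∈ Icc 0 1) {θ : ℝ} (hθ : θ ∈ Ico (0 : ℝ) 1) :
      ((gridRound N z θ j : ℕ) : ℝ) = (⌈N * z j - θ⌉ : ℝ) := by
    exact_mod_cast gridRound_coe hz hθ j
  rw [setIntegral_congr_fun (g := fun θ => |(⌈N * x j - θ⌉ : ℝ) - ⌈N * y j - θ⌉|)
      measurableSet_Ico fun θ hθ => by rw [hceil x hx hθ, hceil y hy hθ],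
    setIntegral_abs_ceil_sub_ceil, ← mul_sub, abs_mul, Nat.abs_cast]

section Grid

variable {ι : Type*} {N : ℕ}

theorem div_natCast_mem_Icc (n : ι → Fin (N + 1)) :
    (fun i => (n i : ℝ) / N) ∈ Icc (0 : ι → ℝ) 1 :=
  ⟨fun i => by positivity, fun i => div_le_one_of_le₀ (Nat.cast_le.2 (n i).is_le) N.cast_nonneg⟩

theorem one_le_sum_abs_sub_of_ne [Fintype ι] {n n' : ι → Fin (N + 1)} (hne : n ≠ n') :
    1 ≤ ∑ j, |((n j : ℕ) : ℝ) - n' j| := by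
  obtain ⟨j, hj⟩ := Function.ne_iff.1 hne
  have hj' : ((n j : ℕ) : ℤ) - n' j ≠ 0 := sub_ne_zero.2 (by exact_mod_cast Fin.val_ne_of_ne hj)
  calc (1 : ℝ) ≤ |((n j : ℕ) : ℝ) - n' j| := by exact_mod_cast Int.one_le_abs hj'
    _ ≤ ∑ j, |((n j : ℕ) : ℝ) - n' j| :=
      Finset.single_le_sum (f := fun j => |((n j : ℕ) : ℝ) - n' j|) (fun _ _ => abs_nonneg _)
        (Finset.mem_univ j)

/-- The `2δ` error of `h` is paid once per unit of grid distance, since distinct grid points are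
at `ℓ¹` distance at least one. -/
theorem abs_comp_grid_sub_le [Fintype ι] {F : (ι → ℝ) → ℝ} {h : ℝ → ℝ} {L δ : ℝ}
    (hF : ∀ x ∈ Icc (0 : ι → ℝ) 1, ∀ y ∈ Icc (0 : ι → ℝ) 1, |F x - F y| ≤ L * ∑ i, |x i - y i|)
    (hh : ∀ z ∈ Icc (0 : ι → ℝ) 1, |h (F z) - F z| ≤ δ) (n n' : ι → Fin (N + 1)) :
    |h (F fun i => (n i : ℝ) / N) - h (F fun i => (n' i : ℝ) / N)| ≤
      (L / N + 2 * δ) * ∑ j, |((n j : ℕ) : ℝ) - n' j| := by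
  rcases eq_or_ne n n' with rfl | hne
  · simp
  set p : ι → ℝ := fun i => (n i : ℝ) / N
  set q : ι → ℝ := fun i => (n' i : ℝ) / N
  set D := ∑ j, |((n j : ℕ) : ℝ) - n' j|
  have hδ : 0 ≤ δ := (abs_nonneg _).trans (hh p (div_natCast_mem_Icc n))
  have hpq : |F p - F q| ≤ L / N * D := by
    refine (hF p (div_natCast_mem_Icc n) q (div_natCast_mem_Icc n')).trans_eq ?_
    simp only [p, q, D, ← sub_div, abs_div, Nat.abs_cast, ← Finset.sum_div]
    ring
  have hD := one_le_sum_abs_sub_of_ne hne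
  calc |h (F p) - h (F q)| ≤ |h (F p) - F p| + |F p - F q| + |F q - h (F q)| := by
        linarith [abs_sub_le (h (F p)) (F p) (h (F q)), abs_sub_le (F p) (F q) (h (F q))]
    _ ≤ δ + L / N * D + δ := by
        gcongr
        · exact hh p (div_natCast_mem_Icc n)
        · rw [abs_sub_comm]; exact hh q (div_natCast_mem_Icc n')
    _ ≤ (L / N + 2 * δ) * D := by nlinarith

end Grid

theorem bddAbove_abs_image_Icc {ι : Type*} [Fintype ι] {f : (ι → ℝ) → ℝ} {L : ℝ}
    (hf : ∀ x ∈ Icc (0 : ι → ℝ) 1, ∀ y ∈ Icc (0 : ι → ℝ) 1, |f x - f y| ≤ L * ∑ i, |x i - y i|) :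
    BddAbove ((fun x => |f x|) '' Icc (0 : ι → ℝ) 1) := by
  refine ⟨|f 0| + |L| * Fintype.card ι, ?_⟩
  rintro _ ⟨z, hz, rfl⟩
  have hsum : ∑ i, |z i - (0 : ι → ℝ) i| ≤ Fintype.card ι := by
    calc ∑ i, |z i - (0 : ι → ℝ) i| ≤ ∑ _i : ι, (1 : ℝ) := Finset.sum_le_sum fun i _ => by
          simpa [abs_of_nonneg (hz.1 i)] using hz.2 i
      _ = Fintype.card ι := by simp
  have hfz := hf z hz 0 (left_mem_Icc.2 zero_le_one)
  calc |f z| ≤ |f 0| + |f z - f 0| := by linarith [abs_sub_abs_le_abs_sub (f z) (f 0)]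
    _ ≤ |f 0| + |L| * Fintype.card ι := by
      gcongr
      exact hfz.trans (mul_le_mul (le_abs_self L) hsum (by positivity) (abs_nonneg L))

theorem interpolant_lipschitz_general (m N : ℕ) (hN : 0 < N)
    (f : (Fin m → ℝ) → ℝ) (L₁ : ℝ)
    (hf : ∀ x ∈ Set.Icc (0 : Fin m → ℝ) 1, ∀ y ∈ Set.Icc (0 : Fin m → ℝ) 1,
      |f x - f y| ≤ L₁ * ∑ i, |x i - y i|)
    (δ : ℝ) (h : ℝ → ℝ)
    (hh : ∀ y : ℝ, |y| ≤ sSup ((fun x => |f x|) '' Set.Icc (0 : Fin m → ℝ) 1) →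
      |h y - y| ≤ δ) :
    ∀ x ∈ Set.Icc (0 : Fin m → ℝ) 1, ∀ y ∈ Set.Icc (0 : Fin m → ℝ) 1,
      |interpolant m N f h x - interpolant m N f h y| ≤
        (L₁ + 2 * N * δ) * ∑ i, |x i - y i| := by
  intro x hx y hy
  have hfh : ∀ z ∈ Icc (0 : Fin m → ℝ) 1, |h (f z) - f z| ≤ δ := fun z hz =>
    hh _ (le_csSup (bddAbove_abs_image_Icc hf) (mem_image_of_mem _ hz))
  rw [interpolant, interpolant, sum_mul_spike_eq_setIntegral _ hx,
    sum_mul_spike_eq_setIntegral _ hy]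
  calc _ ≤ (L₁ / N + 2 * δ) *
        ∫ θ in Ico 0 1, ∑ j, |((gridRound N x θ j : ℕ) : ℝ) - gridRound N y θ j| :=
        abs_integral_sub_integral_le_integral measurable_gridRound measurable_gridRound
          (abs_comp_grid_sub_le hf hfh)
    _ = (L₁ + 2 * N * δ) * ∑ i, |x i - y i| := by
        rw [setIntegral_sum_abs_gridRound_sub hx hy]
        field_simp

/-- If `f : [0,1]^m → ℝ` is `ℓ¹`-Lipschitz with constant `L₁` and `h` satisfies
`|h(y) − y| ≤ δ` on `D_f = {y : |y| ≤ ‖f‖_∞}`, then the spike interpolant `f_N`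
is `ℓ¹`-Lipschitz on `[0,1]^m` with constant at most `L₁ + 2Nδ`. -/
theorem interpolant_lipschitz (m N : ℕ) (hm : 0 < m) (hN : 0 < N)
    (f : (Fin m → ℝ) → ℝ) (L₁ : ℝ)
    (hf : ∀ x ∈ Set.Icc (0 : Fin m → ℝ) 1, ∀ y ∈ Set.Icc (0 : Fin m → ℝ) 1,
      |f x - f y| ≤ L₁ * ∑ i, |x i - y i|)
    (δ : ℝ) (hδ : 0 ≤ δ) (h : ℝ → ℝ)
    (hh : ∀ y : ℝ, |y| ≤ sSup ((fun x => |f x|) '' Set.Icc (0 : Fin m → ℝ) 1) →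
      |h y - y| ≤ δ) :
    ∀ x ∈ Set.Icc (0 : Fin m → ℝ) 1, ∀ y ∈ Set.Icc (0 : Fin m → ℝ) 1,
      |interpolant m N f h x - interpolant m N f h y| ≤
        (L₁ + 2 * N * δ) * ∑ i, |x i - y i| :=
  interpolant_lipschitz_general m N hN f L₁ hf δ h hh
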